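/- Let p > 3/2, and let w(x) = x_n^{1/2} for x_n > 0 and w(x) = 1 for x_n < 0. Then w ∈ A^p_{Δ_N}(ℝ^n), yet w does not satisfy the doubling condition: there is no constant C₀ such that w(2Q) ≤ C₀ w(Q) for every cube Q ⊂ ℝ^n. Indeed, for b ∈ (0, 1/9) and Q_b = [−5b/16, 5b/16]^{n−1} × [b/16, 11b/16] one has 2Q_b = [−5b/8, 5b/8]^{n−1} × [−b/4, b], w(Q_b) ≍ b^{n+1/2} and w(2Q_b) ≍ b^n, so w(2Q_b)/w(Q_b) → ∞ as b → 0. In particular A^p_{Δ_N}(ℝ^n) contains non-doubling weights. -/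

import Mathlib

open MeasureTheory Real Set Filter Function
open scoped ENNReal NNReal Topology

noncomputable section

namespace Paper

abbrev Rn (n : ℕ) := Fin n → ℝ

variable {n : ℕ}

/-- The Euclidean norm on `Rn n`. -/
def eNorm (x : Rn n) : ℝ := Real.sqrt (∑ i, (x i) ^ 2)

/-- The last coordinate `x_n` of a point. -/
def lastC (x : Rn n) : ℝ := if h : 0 < n then x ⟨n - 1, by omega⟩ else 0

/-- The reflection `x̃ = (x', -x_n)` in the last coordinate. -/
def reflPt (x : Rn n) : Rn n := fun i => if (i : ℕ) = n - 1 then -(x i) else x i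

/-- The upper half space `ℝ^n_+`. -/
def upperH (n : ℕ) : Set (Rn n) := {x | 0 < lastC x}

/-- The lower half space `ℝ^n_-`. -/
def lowerH (n : ℕ) : Set (Rn n) := {x | lastC x < 0}

/-- The Heaviside function. -/
def hside (s : ℝ) : ℝ := if 0 ≤ s then 1 else 0

/-- `f_{+,e}` : the even extension of the restriction of `f` to the upper half space. -/
def evenExtP (f : Rn n → ℝ) : Rn n → ℝ := fun x => if 0 ≤ lastC x then f x else f (reflPt x)

/-- `f_{-,e}` : the even extension of the restriction of `f` to the lower half space. -/
def evenExtM (f : Rn n → ℝ) : Rn n → ℝ := fun x => if lastC x ≤ 0 then f x else f (reflPt x)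

/-- `f_o` : the odd extension of the restriction of `f` to the upper half space. -/
def oddExtP (f : Rn n → ℝ) : Rn n → ℝ := fun x => if 0 ≤ lastC x then f x else -(f (reflPt x))

/-- The closed axis-parallel cube with corner `a` and side length `ℓ`. -/
def cube (a : Rn n) (ℓ : ℝ) : Set (Rn n) := {x | ∀ i, a i ≤ x i ∧ x i ≤ a i + ℓ}

/-- The closed axis-parallel cube with center `c` and side length `ℓ`. -/
def cubeC (c : Rn n) (ℓ : ℝ) : Set (Rn n) := {x | ∀ i, |x i - c i| ≤ ℓ / 2}

/-- The dyadic cube of generation `j` indexed by `k ∈ ℤ^n`, of side length `2^{-j}`. -/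
def dyadic (j : ℤ) (k : Fin n → ℤ) : Set (Rn n) :=
  {x | ∀ i, (k i : ℝ) * (2 : ℝ) ^ (-j) ≤ x i ∧ x i < ((k i : ℝ) + 1) * (2 : ℝ) ^ (-j)}

/-- The side length `2^{-j}` of a dyadic cube of generation `j`. -/
def sideD (j : ℤ) : ℝ := (2 : ℝ) ^ (-j)

/-- The doubled (concentric) dyadic cube `2Q` of `Q = dyadic j k`. -/
def dyadic2 (j : ℤ) (k : Fin n → ℤ) : Set (Rn n) :=
  {x | ∀ i, |x i - ((k i : ℝ) + 1 / 2) * sideD j| ≤ sideD j}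

/-- The average `⟨f⟩_Q` of `f` over a set `Q`. -/
def avg (f : Rn n → ℝ) (Q : Set (Rn n)) : ℝ := (volume Q).toReal⁻¹ * ∫ x in Q, f x

/-- `w(Q) = ∫_Q w`, as an extended nonnegative real. -/
def wInt (w : Rn n → ℝ) (Q : Set (Rn n)) : ℝ≥0∞ := ∫⁻ x in Q, ENNReal.ofReal (w x)

/-- The measure `w(x) dx`. -/
def wMeasure (w : Rn n → ℝ) : Measure (Rn n) := volume.withDensity fun x => ENNReal.ofReal (w x)

/-- The `A^p` quotient `⟨w⟩_Q ⟨w^{-1/(p-1)}⟩_Q^{p-1}` of a weight over a cube. -/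
def apQuot (p : ℝ) (w : Rn n → ℝ) (Q : Set (Rn n)) : ℝ :=
  avg w Q * (avg (fun x => w x ^ (-(1 / (p - 1)))) Q) ^ (p - 1)

/-- The `A^p` characteristic of `w` relative to cubes contained in `S`. -/
def apConstOn (S : Set (Rn n)) (p : ℝ) (w : Rn n → ℝ) : ℝ≥0∞ :=
  ⨆ (a : Rn n) (ℓ : ℝ) (_ : 0 < ℓ ∧ cube a ℓ ⊆ S), ENNReal.ofReal (apQuot p w (cube a ℓ))

/-- The Muckenhoupt `A^p` characteristic `[w]_{A^p}`. -/
def apConst (p : ℝ) (w : Rn n → ℝ) : ℝ≥0∞ := apConstOn univ p w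

/-- Muckenhoupt `A^p` weights relative to cubes contained in `S` (e.g. `A^p(ℝ^n_+)`). -/
def IsApOn (S : Set (Rn n)) (p : ℝ) (w : Rn n → ℝ) : Prop :=
  (∀ x, 0 ≤ w x) ∧ LocallyIntegrableOn w S volume ∧ apConstOn S p w < ⊤

/-- Muckenhoupt `A^p(ℝ^n)` weights. -/
def IsAp (p : ℝ) (w : Rn n → ℝ) : Prop :=
  (∀ x, 0 ≤ w x) ∧ LocallyIntegrable w volume ∧ apConst p w < ⊤

/-- The weight class `A^p_{Δ_N}(ℝ^n)` associated with the reflection Neumann Laplacian. -/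
def IsApDeltaN (p : ℝ) (w : Rn n → ℝ) : Prop := IsAp p (evenExtP w) ∧ IsAp p (evenExtM w)

/-- The characteristic `[w]_{A^p_{Δ_N}} = [w_{+,e}]_{A^p} + [w_{-,e}]_{A^p}`. -/
def apDeltaNConst (p : ℝ) (w : Rn n → ℝ) : ℝ≥0∞ :=
  apConst p (evenExtP w) + apConst p (evenExtM w)

/-- The Bloom weight `ν = μ^{1/p} λ^{-1/p}`. -/
def bloomW (p : ℝ) (μ lam : Rn n → ℝ) : Rn n → ℝ :=
  fun x => μ x ^ (1 / p) * lam x ^ (-(1 / p))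

/-- The weighted BMO norm `‖f‖_{BMO_w}`, with cubes restricted to lie in `S`. -/
def bmoNormOn (S : Set (Rn n)) (w f : Rn n → ℝ) : ℝ≥0∞ :=
  ⨆ (a : Rn n) (ℓ : ℝ) (_ : 0 < ℓ ∧ cube a ℓ ⊆ S),
    (∫⁻ x in cube a ℓ, ENNReal.ofReal |f x - avg f (cube a ℓ)|) / wInt w (cube a ℓ)

/-- The Muckenhoupt–Wheeden weighted BMO norm `‖f‖_{BMO_w(ℝ^n)}`. -/
def bmoNorm (w f : Rn n → ℝ) : ℝ≥0∞ := bmoNormOn univ w f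

/-- The norm `‖f‖_{BMO_{w,r}}` appearing in the weighted John–Nirenberg inequality. -/
def bmoNormR (w : Rn n → ℝ) (r : ℝ) (f : Rn n → ℝ) : ℝ≥0∞ :=
  ⨆ (a : Rn n) (ℓ : ℝ) (_ : 0 < ℓ),
    ((∫⁻ x in cube a ℓ,
        ENNReal.ofReal (|f x - avg f (cube a ℓ)| ^ r * w x ^ (1 - r))) /
      wInt w (cube a ℓ)) ^ (1 / r)

/-- The Gauss–Weierstrass heat kernel of the Laplacian on `ℝ^n`. -/
def heatK (n : ℕ) (t : ℝ) (x y : Rn n) : ℝ :=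
  (4 * π * t) ^ (-(n : ℝ) / 2) * Real.exp (-(eNorm (x - y)) ^ 2 / (4 * t))

/-- The heat kernel of the reflection Neumann Laplacian `Δ_N` on `ℝ^n`. -/
def heatKN (n : ℕ) (t : ℝ) (x y : Rn n) : ℝ :=
  (heatK n t x y + heatK n t x (reflPt y)) * hside (lastC x * lastC y)

/-- The heat kernel of the Neumann Laplacian on a half space (`x, y` in the same half space). -/
def heatKNhalf (n : ℕ) (t : ℝ) (x y : Rn n) : ℝ :=
  heatK n t x y + heatK n t x (reflPt y)

/-- The heat kernel of the Dirichlet Laplacian on the upper half space. -/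
def heatKD (n : ℕ) (t : ℝ) (x y : Rn n) : ℝ :=
  heatK n t x y - heatK n t x (reflPt y)

/-- The kernel of `t²L e^{-t²L} = -t² (d/ds) e^{-sL}|_{s=t²}` for a semigroup with kernels `K s`. -/
def qKer (K : ℝ → Rn n → Rn n → ℝ) (t : ℝ) (x y : Rn n) : ℝ :=
  -(t ^ 2) * deriv (fun s => K s x y) (t ^ 2)

/-- The operator `t²L e^{-t²L}` applied to `f`, integrating over `S`. -/
def qOpOn (S : Set (Rn n)) (K : ℝ → Rn n → Rn n → ℝ) (f : Rn n → ℝ) (t : ℝ) (x : Rn n) : ℝ :=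
  ∫ y in S, qKer K t x y * f y

/-- The operator `t²L e^{-t²L}` applied to `f` on all of `ℝ^n`. -/
def qOp (K : ℝ → Rn n → Rn n → ℝ) (f : Rn n → ℝ) (t : ℝ) (x : Rn n) : ℝ :=
  qOpOn univ K f t x

/-- `∬_{Q̂} |T_t(y)|² (t^n / w(Q)) dy dt/t` over the Carleson box `Q̂` of the dyadic cube
`Q = dyadic j k`. -/
def boxInt (T : ℝ → Rn n → ℝ) (w : Rn n → ℝ) (j : ℤ) (k : Fin n → ℤ) : ℝ≥0∞ :=
  (∫⁻ t in Ioc (sideD j / 2) (sideD j),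
      (∫⁻ y in dyadic j k, ENNReal.ofReal ((T t y) ^ 2)) * ENNReal.ofReal (t ^ n / t)) /
    wInt w (dyadic j k)

/-- `Σ_{dyadic Q ⊆ P} ∬_{Q̂} |T_t(y)|² (t^n / w(Q)) dy dt/t`. -/
def carlesonSum (T : ℝ → Rn n → ℝ) (w : Rn n → ℝ) (P : Set (Rn n)) : ℝ≥0∞ :=
  ∑' q : ℤ × (Fin n → ℤ),
    {q : ℤ × (Fin n → ℤ) | dyadic q.1 q.2 ⊆ P}.indicator
      (fun q => boxInt T w q.1 q.2) q

/-- The Carleson-measure-type weighted BMO norm built from the family `T_t = t²L e^{-t²L} f`,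
with the supremum taken over all cubes `P ⊆ S`. -/
def bmoCarlesonOn (S : Set (Rn n)) (w : Rn n → ℝ) (T : ℝ → Rn n → ℝ) : ℝ≥0∞ :=
  ⨆ (a : Rn n) (ℓ : ℝ) (_ : 0 < ℓ ∧ cube a ℓ ⊆ S),
    (carlesonSum T w (cube a ℓ) / wInt w (cube a ℓ)) ^ (1 / 2 : ℝ)

/-- The cone `Γ(x)` of aperture 1 over `x`. -/
def coneD (x : Rn n) (t : ℝ) : Set (Rn n) := {y | eNorm (x - y) < t}

/-- The cone `Γ_{Δ_N}(x) = {(y,t) : |x-y| < t, H(x_n y_n) = 1}`. -/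
def coneN (x : Rn n) (t : ℝ) : Set (Rn n) := {y | eNorm (x - y) < t ∧ 0 ≤ lastC x * lastC y}

/-- The generic Littlewood–Paley area function `( ∬_{cone x} |T_t(y)|² dy dt/t^{n+1} )^{1/2}`. -/
def sArea (n : ℕ) (T : ℝ → Rn n → ℝ) (cone : Rn n → ℝ → Set (Rn n)) (x : Rn n) : ℝ≥0∞ :=
  (∫⁻ t in Ioi (0 : ℝ),
      (∫⁻ y in cone x t, ENNReal.ofReal ((T t y) ^ 2)) / ENNReal.ofReal (t ^ (n + 1))) ^
    (1 / 2 : ℝ)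

/-- The area function `S_Δ(f)` associated with the Laplacian. -/
def sDelta (f : Rn n → ℝ) (x : Rn n) : ℝ≥0∞ := sArea n (qOp (heatK n) f) coneD x

/-- The area function `S_{Δ_N}(f)` associated with the reflection Neumann Laplacian. -/
def sDeltaN (f : Rn n → ℝ) (x : Rn n) : ℝ≥0∞ := sArea n (qOp (heatKN n) f) coneN x

/-- The norm of `H^1_{Δ,w}(ℝ^n)`: `‖S_Δ f‖_{L^1_w}`. -/
def h1DeltaNorm (w f : Rn n → ℝ) : ℝ≥0∞ := ∫⁻ x, sDelta f x ∂(wMeasure w)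

/-- The norm of `H^1_{Δ_N,w}(ℝ^n)`: `‖S_{Δ_N} f‖_{L^1_w}`. -/
def h1DeltaNNorm (w f : Rn n → ℝ) : ℝ≥0∞ := ∫⁻ x, sDeltaN f x ∂(wMeasure w)

/-- The dimensional constant `C_n = Γ((n+1)/2) / π^{(n+1)/2}` of the Riesz kernels. -/
def Cdim (n : ℕ) : ℝ := Real.Gamma (((n : ℝ) + 1) / 2) / π ^ (((n : ℝ) + 1) / 2)

/-- The kernel of the `i`-th Riesz transform of the reflection Neumann Laplacian `Δ_N`. -/
def rieszNKer (i : Fin n) (x y : Rn n) : ℝ :=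
  (-Cdim n * ((x i - y i) / eNorm (x - y) ^ (n + 1) +
      (x i - reflPt y i) / eNorm (x - reflPt y) ^ (n + 1))) * hside (lastC x * lastC y)

/-- The kernel of the `i`-th Riesz transform of the Neumann Laplacian on a half space. -/
def rieszNhalfKer (i : Fin n) (x y : Rn n) : ℝ :=
  -Cdim n * ((x i - y i) / eNorm (x - y) ^ (n + 1) +
      (x i - reflPt y i) / eNorm (x - reflPt y) ^ (n + 1))

/-- The kernel of the `i`-th Riesz transform of the Dirichlet Laplacian on the upper half space. -/
def rieszDKer (i : Fin n) (x y : Rn n) : ℝ :=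
  -Cdim n * ((x i - y i) / eNorm (x - y) ^ (n + 1) -
      (x i - reflPt y i) / eNorm (x - reflPt y) ^ (n + 1))

/-- Principal value singular integral operator with kernel `K`, integrating over `S`. -/
def pvOpOn (S : Set (Rn n)) (K : Rn n → Rn n → ℝ) (f : Rn n → ℝ) (x : Rn n) : ℝ :=
  limUnder (𝓝[>] (0 : ℝ)) fun ε => ∫ y in {y ∈ S | ε < eNorm (x - y)}, K x y * f y

/-- The `i`-th Riesz transform `R_{N,i} = ∂_i Δ_N^{-1/2}` of the reflection Neumann Laplacian. -/
def rieszN (i : Fin n) (f : Rn n → ℝ) : Rn n → ℝ := pvOpOn univ (rieszNKer i) f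

/-- The `i`-th Riesz transform `R_{N_+,i}` of the Neumann Laplacian on the upper half space. -/
def rieszNhalf (i : Fin n) (f : Rn n → ℝ) : Rn n → ℝ := pvOpOn (upperH n) (rieszNhalfKer i) f

/-- The `i`-th Riesz transform `R_{D,i}` of the Dirichlet Laplacian on the upper half space. -/
def rieszD (i : Fin n) (f : Rn n → ℝ) : Rn n → ℝ := pvOpOn (upperH n) (rieszDKer i) f

/-- The commutator `[b, T] f = b · Tf - T(bf)`. -/
def commOp (T : (Rn n → ℝ) → Rn n → ℝ) (b f : Rn n → ℝ) : Rn n → ℝ :=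
  fun x => b x * T f x - T (fun y => b y * f y) x

/-- The operator norm of `T : L^p(μm) → L^p(νm)`. -/
def opNorm (T : (Rn n → ℝ) → Rn n → ℝ) (p : ℝ) (μm νm : Measure (Rn n)) : ℝ≥0∞ :=
  ⨆ f : Rn n → ℝ,
    eLpNorm (T f) (ENNReal.ofReal p) νm / eLpNorm f (ENNReal.ofReal p) μm

/-- The class `𝓜` of locally integrable functions with
`∫ |f(x)|²/(1+|x|^{n+ε}) dx < ∞` for some `ε > 0`. -/
def MemM (f : Rn n → ℝ) : Prop :=
  LocallyIntegrable f volume ∧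
    ∃ ε : ℝ, 0 < ε ∧
      ∫⁻ x, ENNReal.ofReal ((f x) ^ 2 / (1 + eNorm x ^ ((n : ℝ) + ε))) < ⊤

/-- The rescaled wavelet `2^{jn/2} ψ(2^j x - γ)` associated to the dyadic cube `(j, γ)`. -/
def wletR (ψ : Rn n → ℝ) (j : ℤ) (γ : Fin n → ℤ) : Rn n → ℝ :=
  fun x => (2 : ℝ) ^ ((j : ℝ) * n / 2) * ψ (fun i => (2 : ℝ) ^ j * x i - (γ i : ℝ))

/-- A (Daubechies-type) wavelet system of order `m` on `ℝ^n`. -/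
structure WaveletSystem (n m : ℕ) where
  ψ : Fin (2 ^ n - 1) → Rn n → ℝ
  φ : Rn n → ℝ
  ψ_smooth : ∀ ε, ContDiff ℝ 1 (ψ ε)
  ψ_support : ∀ ε, HasCompactSupport (ψ ε)
  orthonormal : ∀ ε j γ ε' j' γ',
    ∫ x, wletR (ψ ε) j γ x * wletR (ψ ε') j' γ' x =
      if ε = ε' ∧ j = j' ∧ γ = γ' then 1 else 0
  complete : ∀ f : Rn n → ℝ, MemLp f 2 volume →
    (∀ ε j γ, ∫ x, f x * wletR (ψ ε) j γ x = 0) → f =ᵐ[volume] 0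
  cancel : ∀ ε (k : Fin n → ℕ), (∑ i, k i) ≤ m →
    ∫ x, ψ ε x * ∏ i, x i ^ k i = 0
  φ_cont : Continuous φ
  φ_support : HasCompactSupport φ
  φ_int : (∫ x, φ x) ≠ 0
  ψ_comb : ∀ ε, ∃ (s : Finset (Fin n → ℤ)) (c : (Fin n → ℤ) → ℝ),
    ψ ε = fun x => ∑ γ ∈ s, c γ * φ (fun i => x i - (γ i : ℝ))

/-- The wavelet coefficient `⟨f, ψ_Q^ε⟩`. -/
def wcoef {m : ℕ} (W : WaveletSystem n m) (ε : Fin (2 ^ n - 1)) (j : ℤ) (γ : Fin n → ℤ)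
    (f : Rn n → ℝ) : ℝ :=
  ∫ x, f x * wletR (W.ψ ε) j γ x

/-- The square of the wavelet square function `S_ψ(f)(x)²`. -/
def sWaveSq {m : ℕ} (W : WaveletSystem n m) (f : Rn n → ℝ) (x : Rn n) : ℝ≥0∞ :=
  ∑' q : Fin (2 ^ n - 1) × ℤ × (Fin n → ℤ),
    (dyadic2 q.2.1 q.2.2).indicator
      (fun _ => ENNReal.ofReal ((wcoef W q.1 q.2.1 q.2.2 f) ^ 2) /
        ENNReal.ofReal (sideD q.2.1 ^ n)) x

/-- The norm of the weighted wavelet Hardy space `H^1_{w,wavelet}`: `‖S_ψ f‖_{L^1_w}`. -/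
def h1WaveNorm {m : ℕ} (W : WaveletSystem n m) (w f : Rn n → ℝ) : ℝ≥0∞ :=
  ∫⁻ x, (sWaveSq W f x) ^ (1 / 2 : ℝ) ∂(wMeasure w)

/-- The weighted Carleson measure norm `‖f‖_{CM_w}`. -/
def cmNorm {m : ℕ} (W : WaveletSystem n m) (w f : Rn n → ℝ) : ℝ≥0∞ :=
  ⨆ (J : ℤ) (Γ : Fin n → ℤ),
    ((∑' q : Fin (2 ^ n - 1) × ℤ × (Fin n → ℤ),
        {q : Fin (2 ^ n - 1) × ℤ × (Fin n → ℤ) | dyadic q.2.1 q.2.2 ⊆ dyadic J Γ}.indicator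
          (fun q => ENNReal.ofReal ((wcoef W q.1 q.2.1 q.2.2 f) ^ 2) *
            ENNReal.ofReal (sideD q.2.1 ^ n) / wInt w (dyadic q.2.1 q.2.2)) q) /
      wInt w (dyadic J Γ)) ^ (1 / 2 : ℝ)

/-- The wavelet pairing `Σ_Q Σ_ε ⟨f, ψ_Q^ε⟩ ⟨b, ψ_Q^ε⟩`. -/
def wPair {m : ℕ} (W : WaveletSystem n m) (f b : Rn n → ℝ) : ℝ :=
  ∑' q : Fin (2 ^ n - 1) × ℤ × (Fin n → ℤ),
    wcoef W q.1 q.2.1 q.2.2 f * wcoef W q.1 q.2.1 q.2.2 b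

/-- The Fourier transform `φ̂(ξ) = ∫ e^{-2πi x·ξ} φ(x) dx`. -/
def fourierT (φ : Rn n → ℝ) (ξ : Rn n) : ℂ :=
  ∫ x, Complex.exp (-2 * π * Complex.I * (∑ i, x i * ξ i)) * (φ x : ℂ)

/-- The class `𝓡^β` of Schwartz functions with vanishing moments up to order `β` and
nondegenerate Fourier transform. -/
structure RClass (n β : ℕ) where
  φ : SchwartzMap (Rn n) ℝ
  cancel : ∀ k : Fin n → ℕ, (∑ i, k i) ≤ β → ∫ x, φ x * ∏ i, x i ^ k i = 0
  nondeg : ∃ C : ℝ, C ≠ 0 ∧ ∀ ξ : Rn n, ξ ≠ 0 →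
    ∫ t in Ioi (0 : ℝ), ‖fourierT (⇑φ) (t • ξ)‖ ^ 2 / t = C

/-- The dilated convolution `φ_t * f (x)` with `φ_t(x) = t^{-n} φ(x/t)`. -/
def convDil (φ : Rn n → ℝ) (t : ℝ) (f : Rn n → ℝ) (x : Rn n) : ℝ :=
  ∫ y, (1 / t ^ n) * φ (t⁻¹ • (x - y)) * f y

/-- The Littlewood–Paley area function `S_{φ,β}(f)`. -/
def sAreaPhi (φ : Rn n → ℝ) (f : Rn n → ℝ) (x : Rn n) : ℝ≥0∞ :=
  sArea n (fun t y => convDil φ t f y) coneD x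

/-- The norm of `H^1_{w,φ,β}`: `‖S_{φ,β} f‖_{L^1_w}`. -/
def h1AreaNorm (φ : Rn n → ℝ) (w f : Rn n → ℝ) : ℝ≥0∞ :=
  ∫⁻ x, sAreaPhi φ f x ∂(wMeasure w)

/-- A `(1,p,β)`-atom for the weighted atomic Hardy space. -/
def IsAtom (p : ℝ) (β : ℕ) (w : Rn n → ℝ) (a : Rn n → ℝ) : Prop :=
  ∃ (c : Rn n) (ℓ : ℝ), 0 < ℓ ∧ support a ⊆ cube c ℓ ∧
    (∀ k : Fin n → ℕ, (∑ i, k i) ≤ β → ∫ x, a x * ∏ i, x i ^ k i = 0) ∧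
    eLpNorm a (ENNReal.ofReal p) (wMeasure w) ≤ (wInt w (cube c ℓ)) ^ (1 / p - 1)

/-- The atomic norm of the weighted Hardy space `H^{1,p,β}_w(ℝ^n)`. -/
def atomicNorm (p : ℝ) (β : ℕ) (w f : Rn n → ℝ) : ℝ≥0∞ :=
  sInf {s : ℝ≥0∞ | ∃ (c : ℕ → ℝ) (a : ℕ → Rn n → ℝ),
    (∀ j, IsAtom p β w (a j)) ∧
    (∀ᵐ x ∂volume, HasSum (fun j => c j * a j x) (f x)) ∧
    s = ∑' j, ENNReal.ofReal |c j|}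


/-- The weight `w(x) = x_n^{1/2}` for `x_n > 0`, `w(x) = 1` for `x_n < 0`. -/
def wHalf (n : ℕ) : Rn n → ℝ :=
  fun x => if 0 < lastC x then lastC x ^ (1 / 2 : ℝ) else 1

/-- The center `(0, …, 0, 3b/8)` of the cube `Q_b = [-5b/16, 5b/16]^{n-1} × [b/16, 11b/16]`. -/
def ctrQb (n : ℕ) (b : ℝ) : Rn n := fun i => if (i : ℕ) = n - 1 then 3 * b / 8 else 0

/-!
Off the null hyperplane `{x_n = 0}`, `w_{+,e}(x) = |x_n|^{1/2}` and `w_{-,e} ≡ 1 = |x_n|^0` are power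
weights. By Fubini, an average of `|x_i|^α` over a cube of side `ℓ` and corner `a` is a
one-dimensional average of `|t|^α`, which is at most a constant times `max(ℓ, |a_i|/2)^α` for
`-1 < α ≤ 1`. For `0 ≤ α < p - 1` the dual exponent `-α/(p-1)` is still above `-1`, so the two
powers of `max(ℓ, |a_i|/2)` in the `A^p` quotient cancel; `α = 1/2` needs exactly `p > 3/2`.

Doubling fails because `w ≈ b^{1/2}` on `Q_b`, while `2Q_b` contains a cube of side `b/4` in the
lower half space, where `w = 1`; hence `w(2Q_b) / w(Q_b) ≳ b^{-1/2}`.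
-/

lemma cube_eq_pi (a : Rn n) (ℓ : ℝ) : cube a ℓ = univ.pi fun i => Icc (a i) (a i + ℓ) := by
  ext x
  simp only [cube, Set.mem_pi, mem_univ, true_implies, mem_Icc]
  rfl

lemma volume_cube (a : Rn n) (ℓ : ℝ) : volume (cube a ℓ) = ENNReal.ofReal ℓ ^ n := by
  rw [cube_eq_pi, volume_pi_pi]
  simp

lemma cubeC_eq_pi (c : Rn n) (ℓ : ℝ) :
    cubeC c ℓ = univ.pi fun i => Icc (c i - ℓ / 2) (c i + ℓ / 2) := by
  ext x
  simp only [cubeC, Set.mem_pi, mem_univ, true_implies, mem_Icc, abs_le]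
  exact forall_congr' fun i => by constructor <;> rintro ⟨h₁, h₂⟩ <;> constructor <;> linarith

lemma measurableSet_cubeC (c : Rn n) (ℓ : ℝ) : MeasurableSet (cubeC c ℓ) := by
  rw [cubeC_eq_pi]
  exact MeasurableSet.univ_pi fun _ => measurableSet_Icc

lemma volume_cubeC (c : Rn n) (ℓ : ℝ) : volume (cubeC c ℓ) = ENNReal.ofReal ℓ ^ n := by
  rw [cubeC_eq_pi, volume_pi_pi]
  simp [add_sub_sub_cancel]

lemma avg_cube_comp_eval (a : Rn n) {ℓ : ℝ} (hℓ : 0 < ℓ) (i : Fin n) {f : ℝ → ℝ}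
    (hf : Measurable f) :
    avg (fun x => f (x i)) (cube a ℓ) = ℓ⁻¹ * ∫ t in Icc (a i) (a i + ℓ), f t := by
  obtain ⟨m, rfl⟩ : ∃ m, n = m + 1 := Nat.exists_eq_add_one_of_ne_zero i.pos.ne'
  have hfubini : ∫ x in cube a ℓ, f (x i) = ℓ ^ m * ∫ t in Icc (a i) (a i + ℓ), f t := by
    rw [cube_eq_pi, volume_pi, Measure.restrict_pi_pi,
      ← integral_map (measurable_pi_apply i).aemeasurable hf.aestronglyMeasurable,
      Measure.pi_map_eval, integral_smul_measure]
    simp [Finset.prod_const, Finset.card_erase_of_mem, hℓ.le]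
  rw [avg, hfubini, volume_cube, ENNReal.toReal_pow, ENNReal.toReal_ofReal hℓ.le]
  field_simp
  ring

lemma integral_Icc_abs_rpow {α R : ℝ} (hα : -1 < α) (hR : 0 ≤ R) :
    ∫ t in Icc (-R) R, |t| ^ α = 2 * (R ^ (α + 1) / (α + 1)) := by
  have hcomp : (fun t : ℝ => (Iic R).indicator (· ^ α) |t|) =
      (Icc (-R) R).indicator fun t => |t| ^ α := by
    ext t
    simp only [indicator, mem_Iic, mem_Icc, ← abs_le]
  have h := integral_comp_abs (f := (Iic R).indicator (· ^ α))
  rw [hcomp, integral_indicator measurableSet_Icc, setIntegral_indicator measurableSet_Iic,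
    Ioi_inter_Iic, ← intervalIntegral.integral_of_le hR, integral_rpow (Or.inl hα),
    zero_rpow (by linarith), sub_zero] at h
  exact h

lemma integrableOn_Icc_abs_rpow {α R : ℝ} (hα : -1 < α) (hR : 0 < R) :
    IntegrableOn (fun t => |t| ^ α) (Icc (-R) R) :=
  -- a non-integrable function has Bochner integral `0`
  Integrable.of_integral_ne_zero <| by
    rw [integral_Icc_abs_rpow hα hR.le]
    have : 0 < α + 1 := by linarith
    positivity

lemma setIntegral_Icc_abs_rpow_le_of_abs_le {α a ℓ : ℝ} (hα₀ : -1 < α) (hα₁ : α ≤ 1)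
    (hℓ : 0 < ℓ) (ha : |a| ≤ 2 * ℓ) :
    ∫ t in Icc a (a + ℓ), |t| ^ α ≤ 18 / (α + 1) * ℓ ^ (α + 1) := by
  have hα : 0 < α + 1 := by linarith
  have hsub : Icc a (a + ℓ) ⊆ Icc (-(3 * ℓ)) (3 * ℓ) := by
    rw [abs_le] at ha
    exact Icc_subset_Icc (by linarith) (by linarith)
  have h3 : (3 : ℝ) ^ (α + 1) ≤ 3 ^ (2 : ℝ) := rpow_le_rpow_of_exponent_le (by norm_num) (by linarith)
  calc ∫ t in Icc a (a + ℓ), |t| ^ α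
      ≤ ∫ t in Icc (-(3 * ℓ)) (3 * ℓ), |t| ^ α :=
        setIntegral_mono_set (integrableOn_Icc_abs_rpow hα₀ (by positivity))
          (.of_forall fun t => by positivity) hsub.eventuallyLE
    _ = 2 * 3 ^ (α + 1) / (α + 1) * ℓ ^ (α + 1) := by
        rw [integral_Icc_abs_rpow hα₀ (by positivity), mul_rpow (by norm_num) hℓ.le]
        ring
    _ ≤ 18 / (α + 1) * ℓ ^ (α + 1) := by
        gcongr
        norm_num at h3
        linarith

lemma setIntegral_Icc_abs_rpow_le_of_lt_abs {α a ℓ : ℝ} (hα₀ : -1 < α) (hα₁ : α ≤ 1)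
    (hℓ : 0 < ℓ) (ha : 2 * ℓ < |a|) :
    ∫ t in Icc a (a + ℓ), |t| ^ α ≤ 18 / (α + 1) * (ℓ * (|a| / 2) ^ α) := by
  set s := |a| / 2 with hs_def
  have hs : 0 < s := by linarith
  have hpt : ∀ t ∈ Icc a (a + ℓ), ‖|t| ^ α‖ ≤ 3 * s ^ α := by
    intro t ht
    have hta : |t - a| ≤ ℓ := abs_le.2 ⟨by linarith [ht.1], by linarith [ht.2]⟩
    have h₁ : s ≤ |t| := by linarith [hs_def, abs_sub_abs_le_abs_sub a t, abs_sub_comm a t]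
    have h₂ : |t| ≤ 3 * s := by linarith [hs_def, abs_sub_abs_le_abs_sub t a]
    rw [Real.norm_of_nonneg (by positivity)]
    rcases le_total 0 α with hα | hα
    · calc |t| ^ α ≤ (3 * s) ^ α := rpow_le_rpow (abs_nonneg t) h₂ hα
        _ = 3 ^ α * s ^ α := mul_rpow (by norm_num) hs.le
        _ ≤ 3 * s ^ α := by
          gcongr
          simpa using rpow_le_rpow_of_exponent_le (x := 3) (by norm_num) hα₁
    · calc |t| ^ α ≤ s ^ α := rpow_le_rpow_of_nonpos hs h₁ hα
        _ ≤ 3 * s ^ α := by linarith [rpow_pos_of_pos hs α]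
  calc ∫ t in Icc a (a + ℓ), |t| ^ α
      ≤ ‖∫ t in Icc a (a + ℓ), |t| ^ α‖ := le_norm_self _
    _ ≤ 3 * s ^ α * volume.real (Icc a (a + ℓ)) :=
        norm_setIntegral_le_of_norm_le_const measure_Icc_lt_top hpt
    _ = 3 * (ℓ * s ^ α) := by
        rw [Real.volume_real_Icc_of_le (by linarith), add_sub_cancel_left]
        ring
    _ ≤ 18 / (α + 1) * (ℓ * s ^ α) := by
        gcongr
        rw [le_div_iff₀ (by linarith)]
        linarith

lemma setIntegral_Icc_abs_rpow_le {α a ℓ : ℝ} (hα₀ : -1 < α) (hα₁ : α ≤ 1) (hℓ : 0 < ℓ) :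
    ∫ t in Icc a (a + ℓ), |t| ^ α ≤ 18 / (α + 1) * (ℓ * max ℓ (|a| / 2) ^ α) := by
  rcases le_or_gt |a| (2 * ℓ) with ha | ha
  · rw [max_eq_left (by linarith), ← rpow_one_add' hℓ.le (by linarith), add_comm 1 α]
    exact setIntegral_Icc_abs_rpow_le_of_abs_le hα₀ hα₁ hℓ ha
  · rw [max_eq_right (by linarith)]
    exact setIntegral_Icc_abs_rpow_le_of_lt_abs hα₀ hα₁ hℓ ha

lemma avg_cube_abs_rpow_le (i : Fin n) {α : ℝ} (hα₀ : -1 < α) (hα₁ : α ≤ 1) (a : Rn n) {ℓ : ℝ}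
    (hℓ : 0 < ℓ) :
    avg (fun x => |x i| ^ α) (cube a ℓ) ≤ 18 / (α + 1) * max ℓ (|a i| / 2) ^ α := by
  rw [avg_cube_comp_eval a hℓ i (continuous_abs.measurable.pow_const α)]
  calc ℓ⁻¹ * ∫ t in Icc (a i) (a i + ℓ), |t| ^ α
      ≤ ℓ⁻¹ * (18 / (α + 1) * (ℓ * max ℓ (|a i| / 2) ^ α)) := by
        gcongr
        exact setIntegral_Icc_abs_rpow_le hα₀ hα₁ hℓ
    _ = 18 / (α + 1) * max ℓ (|a i| / 2) ^ α := by
        field_simp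

lemma avg_congr_ae {f g : Rn n → ℝ} (h : f =ᵐ[volume] g) (Q : Set (Rn n)) :
    avg f Q = avg g Q := by
  rw [avg, avg, integral_congr_ae (ae_restrict_of_ae h)]

lemma apConst_congr_ae {p : ℝ} {w v : Rn n → ℝ} (h : w =ᵐ[volume] v) :
    apConst p w = apConst p v := by
  have hpow : (fun x => w x ^ (-(1 / (p - 1)))) =ᵐ[volume] fun x => v x ^ (-(1 / (p - 1))) :=
    h.fun_comp (· ^ (-(1 / (p - 1))))
  simp only [apConst, apConstOn, apQuot, avg_congr_ae h, avg_congr_ae hpow]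

lemma IsAp.congr_ae {p : ℝ} {w v : Rn n → ℝ} (hv : IsAp p v) (hw : ∀ x, 0 ≤ w x)
    (h : w =ᵐ[volume] v) : IsAp p w :=
  ⟨hw, hv.2.1.congr h.symm, (apConst_congr_ae h).trans_lt hv.2.2⟩

lemma apConst_lt_top_of_apQuot_le {p M : ℝ} {w : Rn n → ℝ}
    (h : ∀ a ℓ, 0 < ℓ → apQuot p w (cube a ℓ) ≤ M) : apConst p w < ⊤ :=
  lt_of_le_of_lt (iSup₂_le fun a ℓ => iSup_le fun hℓ => ENNReal.ofReal_le_ofReal (h a ℓ hℓ.1))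
    ENNReal.ofReal_lt_top

lemma apQuot_abs_rpow_le (i : Fin n) {α p : ℝ} (hα₀ : 0 ≤ α) (hα₁ : α ≤ 1) (hαp : α < p - 1)
    (a : Rn n) {ℓ : ℝ} (hℓ : 0 < ℓ) :
    apQuot p (fun x => |x i| ^ α) (cube a ℓ) ≤
      18 / (α + 1) * (18 / (α * -(1 / (p - 1)) + 1)) ^ (p - 1) := by
  have hp : 0 < p - 1 := by linarith
  set β := α * -(1 / (p - 1)) with hβ
  have hβp : β * (p - 1) = -α := by rw [hβ]; field_simp
  have hβ₀ : -1 < β := by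
    rw [hβ, mul_neg, neg_lt_neg_iff, mul_one_div, div_lt_one hp]
    exact hαp
  have hβ₁ : β ≤ 1 := by
    rw [hβ, mul_neg]
    linarith [div_nonneg hα₀ hp.le, mul_one_div α (p - 1)]
  set s := max ℓ (|a i| / 2)
  have hs : 0 < s := lt_max_of_lt_left hℓ
  have hdual : (fun x : Rn n => (|x i| ^ α) ^ (-(1 / (p - 1)))) = fun x => |x i| ^ β := by
    ext x
    rw [← rpow_mul (abs_nonneg _)]
  have havg_nonneg : 0 ≤ avg (fun x => |x i| ^ β) (cube a ℓ) :=
    mul_nonneg (by positivity) (integral_nonneg fun x => by positivity)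
  calc apQuot p (fun x => |x i| ^ α) (cube a ℓ)
      = avg (fun x => |x i| ^ α) (cube a ℓ) * avg (fun x => |x i| ^ β) (cube a ℓ) ^ (p - 1) := by
        rw [apQuot, hdual]
    _ ≤ 18 / (α + 1) * s ^ α * (18 / (β + 1) * s ^ β) ^ (p - 1) := by
        gcongr
        · exact avg_cube_abs_rpow_le i (by linarith) hα₁ a hℓ
        · exact avg_cube_abs_rpow_le i hβ₀ hβ₁ a hℓ
    _ = 18 / (α + 1) * (18 / (β + 1)) ^ (p - 1) := by
        have hβ1 : 0 < β + 1 := by linarith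
        rw [mul_rpow (by positivity) (by positivity), ← rpow_mul hs.le, hβp, rpow_neg hs.le]
        field_simp

lemma isAp_abs_rpow (i : Fin n) {α p : ℝ} (hα₀ : 0 ≤ α) (hα₁ : α ≤ 1) (hαp : α < p - 1) :
    IsAp p (fun x : Rn n => |x i| ^ α) := by
  refine ⟨fun x => by positivity,
    ((continuous_apply i).abs.rpow_const fun _ => Or.inr hα₀).locallyIntegrable, ?_⟩
  exact apConst_lt_top_of_apQuot_le fun a ℓ hℓ => apQuot_abs_rpow_le i hα₀ hα₁ hαp a hℓ

lemma lastC_eq_apply (hn : 0 < n) (x : Rn n) : lastC x = x ⟨n - 1, by omega⟩ := dif_pos hn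

lemma lastC_reflPt (x : Rn n) : lastC (reflPt x) = -lastC x := by
  unfold lastC
  split_ifs <;> simp [reflPt]

lemma wHalf_nonneg (x : Rn n) : 0 ≤ wHalf n x := by
  unfold wHalf
  split_ifs <;> positivity

lemma wHalf_of_nonpos {x : Rn n} (hx : lastC x ≤ 0) : wHalf n x = 1 := if_neg hx.not_gt

lemma wHalf_le_one {x : Rn n} (hx : lastC x ≤ 1) : wHalf n x ≤ 1 := by
  unfold wHalf
  split_ifs with h
  · exact rpow_le_one h.le hx (by norm_num)
  · exact le_rfl

lemma evenExtM_wHalf : evenExtM (wHalf n) = fun _ => 1 := by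
  ext x
  unfold evenExtM
  split_ifs with h
  · exact wHalf_of_nonpos h
  · exact wHalf_of_nonpos (by rw [lastC_reflPt]; linarith [not_le.1 h])

lemma evenExtP_wHalf_of_ne_zero {x : Rn n} (hx : lastC x ≠ 0) :
    evenExtP (wHalf n) x = |lastC x| ^ (1 / 2 : ℝ) := by
  rcases hx.lt_or_gt with h | h
  · rw [evenExtP, if_neg h.not_ge, wHalf, lastC_reflPt, if_pos (neg_pos.2 h), abs_of_neg h]
  · rw [evenExtP, if_pos h.le, wHalf, if_pos h, abs_of_pos h]

lemma evenExtP_wHalf_ae_eq (hn : 0 < n) :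
    evenExtP (wHalf n) =ᵐ[volume] fun x => |x ⟨n - 1, by omega⟩| ^ (1 / 2 : ℝ) := by
  have hne : ∀ᵐ x : Rn n ∂volume, x ⟨n - 1, by omega⟩ ≠ 0 := by
    rw [volume_pi]
    exact Measure.ae_eval_ne _ _ 0
  filter_upwards [hne] with x hx
  rw [← lastC_eq_apply hn x] at hx ⊢
  exact evenExtP_wHalf_of_ne_zero hx

lemma isApDeltaN_wHalf (hn : 0 < n) {p : ℝ} (hp : 3 / 2 < p) : IsApDeltaN p (wHalf n) := by
  set i : Fin n := ⟨n - 1, by omega⟩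
  refine ⟨(isAp_abs_rpow i (by norm_num) (by norm_num) (by linarith)).congr_ae
    (fun x => ?_) (evenExtP_wHalf_ae_eq hn), ?_⟩
  · unfold evenExtP
    split_ifs <;> exact wHalf_nonneg _
  · -- the constant weight `1` is the power weight `|x_i| ^ 0`
    simpa [evenExtM_wHalf] using isAp_abs_rpow (p := p) i le_rfl zero_le_one (by linarith)

lemma cubeC_ctrQb_eq {b ℓ lo hi r : ℝ} (hlo : lo = 3 * b / 8 - ℓ / 2)
    (hhi : hi = 3 * b / 8 + ℓ / 2) (hr : r = ℓ / 2) :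
    cubeC (ctrQb n b) ℓ = {x : Rn n | ∀ i : Fin n,
      if (i : ℕ) = n - 1 then lo ≤ x i ∧ x i ≤ hi else |x i| ≤ r} := by
  ext x
  refine forall_congr' fun i => ?_
  dsimp only [ctrQb]
  split_ifs
  · rw [abs_le]
    constructor <;> rintro ⟨h₁, h₂⟩ <;> constructor <;> linarith
  · rw [sub_zero, hr]

lemma abs_lastC_sub_le_of_mem_cubeC_ctrQb (hn : 0 < n) {b ℓ : ℝ} {x : Rn n}
    (hx : x ∈ cubeC (ctrQb n b) ℓ) : |lastC x - 3 * b / 8| ≤ ℓ / 2 := by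
  simpa [lastC_eq_apply hn, ctrQb] using hx ⟨n - 1, by omega⟩

lemma toReal_wInt_cubeC_bounds {w : Rn n → ℝ} {c c' : Rn n} {ℓ ℓ' m M : ℝ} (hℓ : 0 ≤ ℓ)
    (hℓ' : 0 ≤ ℓ') (hm : 0 ≤ m) (hM : 0 ≤ M) (hsub : cubeC c' ℓ' ⊆ cubeC c ℓ)
    (hlow : ∀ x ∈ cubeC c' ℓ', m ≤ w x) (hup : ∀ x ∈ cubeC c ℓ, w x ≤ M) :
    m * ℓ' ^ n ≤ (wInt w (cubeC c ℓ)).toReal ∧ (wInt w (cubeC c ℓ)).toReal ≤ M * ℓ ^ n := by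
  have hupper : wInt w (cubeC c ℓ) ≤ ENNReal.ofReal (M * ℓ ^ n) := calc
    wInt w (cubeC c ℓ) ≤ ∫⁻ _ in cubeC c ℓ, ENNReal.ofReal M :=
        setLIntegral_mono' (measurableSet_cubeC c ℓ) fun x hx =>
          ENNReal.ofReal_le_ofReal (hup x hx)
    _ = ENNReal.ofReal (M * ℓ ^ n) := by
        rw [setLIntegral_const, volume_cubeC, ← ENNReal.ofReal_pow hℓ, ← ENNReal.ofReal_mul hM]
  have hlower : ENNReal.ofReal (m * ℓ' ^ n) ≤ wInt w (cubeC c ℓ) := calc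
    ENNReal.ofReal (m * ℓ' ^ n) = ∫⁻ _ in cubeC c' ℓ', ENNReal.ofReal m := by
        rw [setLIntegral_const, volume_cubeC, ← ENNReal.ofReal_pow hℓ', ← ENNReal.ofReal_mul hm]
    _ ≤ ∫⁻ x in cubeC c' ℓ', ENNReal.ofReal (w x) :=
        setLIntegral_mono' (measurableSet_cubeC c' ℓ') fun x hx =>
          ENNReal.ofReal_le_ofReal (hlow x hx)
    _ ≤ wInt w (cubeC c ℓ) := lintegral_mono_set hsub
  exact ⟨(ENNReal.ofReal_le_iff_le_toReal (ne_top_of_le_ne_top ENNReal.ofReal_ne_top hupper)).1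
    hlower, ENNReal.toReal_le_of_le_ofReal (by positivity) hupper⟩

lemma toReal_wInt_wHalf_Qb_bounds (hn : 0 < n) {b : ℝ} (hb : 0 < b) :
    √b / 4 * (5 * b / 8) ^ n ≤ (wInt (wHalf n) (cubeC (ctrQb n b) (5 * b / 8))).toReal ∧
      (wInt (wHalf n) (cubeC (ctrQb n b) (5 * b / 8))).toReal ≤ √b * (5 * b / 8) ^ n := by
  have hw : ∀ x ∈ cubeC (ctrQb n b) (5 * b / 8), √b / 4 ≤ wHalf n x ∧ wHalf n x ≤ √b := by
    intro x hx
    have h := abs_le.1 (abs_lastC_sub_le_of_mem_cubeC_ctrQb hn hx)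
    rw [wHalf, if_pos (by linarith), ← sqrt_eq_rpow]
    refine ⟨?_, sqrt_le_sqrt (by linarith)⟩
    calc √b / 4 = √(b / 16) := by
          rw [sqrt_div' _ (by norm_num), show (16 : ℝ) = 4 ^ 2 by norm_num, sqrt_sq (by norm_num)]
      _ ≤ √(lastC x) := sqrt_le_sqrt (by linarith)
  exact toReal_wInt_cubeC_bounds (by positivity) (by positivity) (by positivity) (by positivity)
    subset_rfl (fun x hx => (hw x hx).1) fun x hx => (hw x hx).2

lemma toReal_wInt_wHalf_two_Qb_bounds (hn : 0 < n) {b : ℝ} (hb : 0 < b) (hb₁ : b ≤ 1) :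
    (b / 4) ^ n ≤ (wInt (wHalf n) (cubeC (ctrQb n b) (2 * (5 * b / 8)))).toReal ∧
      (wInt (wHalf n) (cubeC (ctrQb n b) (2 * (5 * b / 8)))).toReal ≤ (2 * (5 * b / 8)) ^ n := by
  -- the lower bound comes from the subcube `[-b/8, b/8]^{n-1} × [-b/4, 0]`, on which `w = 1`
  set c' : Rn n := fun i => if (i : ℕ) = n - 1 then -b / 8 else 0
  have hsub : cubeC c' (b / 4) ⊆ cubeC (ctrQb n b) (2 * (5 * b / 8)) := by
    intro x hx i
    have h := abs_le.1 (hx i)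
    simp only [c', ctrQb] at h ⊢
    split_ifs at h ⊢ <;> rw [abs_le] <;> constructor <;> linarith
  have hlow : ∀ x ∈ cubeC c' (b / 4), 1 ≤ wHalf n x := by
    intro x hx
    have h := abs_le.1 (hx ⟨n - 1, by omega⟩)
    simp only [c', ↓reduceIte] at h
    rw [wHalf_of_nonpos (by rw [lastC_eq_apply hn]; linarith)]
  have hup : ∀ x ∈ cubeC (ctrQb n b) (2 * (5 * b / 8)), wHalf n x ≤ 1 := fun x hx =>
    wHalf_le_one (by linarith [(abs_le.1 (abs_lastC_sub_le_of_mem_cubeC_ctrQb hn hx)).2])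
  simpa only [one_mul] using toReal_wInt_cubeC_bounds (by positivity) (by positivity)
    zero_le_one zero_le_one hsub hlow hup

lemma rpow_natCast_add_half {b : ℝ} (hb : 0 < b) (n : ℕ) : b ^ ((n : ℝ) + 1 / 2) = b ^ n * √b := by
  rw [rpow_add hb, rpow_natCast, sqrt_eq_rpow]

lemma exists_wInt_wHalf_Qb_bounds (hn : 0 < n) :
    ∃ c C : ℝ, 0 < c ∧ 0 < C ∧ ∀ b : ℝ, 0 < b → b < 1 / 9 →
      (c * b ^ ((n : ℝ) + 1 / 2) ≤ (wInt (wHalf n) (cubeC (ctrQb n b) (5 * b / 8))).toReal ∧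
        (wInt (wHalf n) (cubeC (ctrQb n b) (5 * b / 8))).toReal ≤ C * b ^ ((n : ℝ) + 1 / 2)) ∧
      (c * b ^ (n : ℝ) ≤ (wInt (wHalf n) (cubeC (ctrQb n b) (2 * (5 * b / 8)))).toReal ∧
        (wInt (wHalf n) (cubeC (ctrQb n b) (2 * (5 * b / 8)))).toReal ≤ C * b ^ (n : ℝ)) := by
  refine ⟨(1 / 4) ^ n / 4, (5 / 4) ^ n, by positivity, by positivity, fun b hb hb₉ => ?_⟩
  obtain ⟨hQ₁, hQ₂⟩ := toReal_wInt_wHalf_Qb_bounds hn hb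
  obtain ⟨h2Q₁, h2Q₂⟩ := toReal_wInt_wHalf_two_Qb_bounds hn hb (by linarith)
  rw [rpow_natCast_add_half hb, rpow_natCast]
  refine ⟨⟨le_trans ?_ hQ₁, hQ₂.trans ?_⟩, le_trans ?_ h2Q₁, h2Q₂.trans_eq ?_⟩
  · calc (1 / 4) ^ n / 4 * (b ^ n * √b) = √b / 4 * (b / 4) ^ n := by ring
      _ ≤ √b / 4 * (5 * b / 8) ^ n := by gcongr √b / 4 * ?_ ^ n; linarith
  · calc √b * (5 * b / 8) ^ n ≤ √b * (5 * b / 4) ^ n := by gcongr; linarith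
      _ = (5 / 4) ^ n * (b ^ n * √b) := by ring
  · calc (1 / 4) ^ n / 4 * b ^ n ≤ (1 / 4) ^ n * b ^ n := by
          have : 0 ≤ (1 / 4 : ℝ) ^ n * b ^ n := by positivity
          linarith
      _ = (b / 4) ^ n := by ring
  · ring

lemma not_doubling_of_Qb_bounds {w : Rn n → ℝ} {c C : ℝ} (hc : 0 < c)
    (hQb : ∀ b : ℝ, 0 < b → b < 1 / 9 →
      (wInt w (cubeC (ctrQb n b) (5 * b / 8))).toReal ≤ C * b ^ ((n : ℝ) + 1 / 2) ∧
      c * b ^ (n : ℝ) ≤ (wInt w (cubeC (ctrQb n b) (2 * (5 * b / 8)))).toReal) :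
    ¬ ∃ C₀ : ℝ, ∀ (c : Rn n) (ℓ : ℝ), 0 < ℓ →
        (wInt w (cubeC c (2 * ℓ))).toReal ≤ C₀ * (wInt w (cubeC c ℓ)).toReal := by
  rintro ⟨C₀, hC₀⟩
  have hlim : Tendsto (fun b => |C₀| * C * √b) (𝓝[>] 0) (𝓝 0) := by
    have hcont : Continuous fun b => |C₀| * C * √b := by fun_prop
    simpa using (hcont.tendsto 0).mono_left nhdsWithin_le_nhds
  obtain ⟨b, ⟨hb, hb₉⟩, hsmall⟩ :=
    ((show ∀ᶠ b in 𝓝[>] (0 : ℝ), b ∈ Ioo 0 (1 / 9) from Ioo_mem_nhdsGT (by norm_num)).and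
      (hlim.eventually (gt_mem_nhds hc))).exists
  obtain ⟨hQ, h2Q⟩ := hQb b hb hb₉
  rw [rpow_natCast_add_half hb, rpow_natCast] at *
  have : c * b ^ n < c * b ^ n := calc
    c * b ^ n ≤ (wInt w (cubeC (ctrQb n b) (2 * (5 * b / 8)))).toReal := h2Q
    _ ≤ C₀ * (wInt w (cubeC (ctrQb n b) (5 * b / 8))).toReal := hC₀ _ _ (by positivity)
    _ ≤ |C₀| * (C * (b ^ n * √b)) := by gcongr; exact le_abs_self C₀
    _ = |C₀| * C * √b * b ^ n := by ring
    _ < c * b ^ n := by gcongr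
  exact lt_irrefl _ this

/-- for `p > 3/2`, the weight `w = x_n^{1/2} 1_{x_n>0} + 1_{x_n<0}` belongs to
`A^p_{Δ_N}(ℝ^n)` but is non-doubling: with `Q_b = [-5b/16, 5b/16]^{n-1} × [b/16, 11b/16]`
one has `2Q_b = [-5b/8, 5b/8]^{n-1} × [-b/4, b]`, `w(Q_b) ≍ b^{n+1/2}` and
`w(2Q_b) ≍ b^n`, and no doubling constant exists. -/
theorem ap_deltaN_nondoubling (n : ℕ) (hn : 1 ≤ n) (p : ℝ) (hp : 3 / 2 < p) :
    IsApDeltaN p (wHalf n) ∧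
    (∀ b : ℝ, 0 < b →
      cubeC (ctrQb n b) (5 * b / 8) =
        {x : Rn n | ∀ i : Fin n,
          if (i : ℕ) = n - 1 then b / 16 ≤ x i ∧ x i ≤ 11 * b / 16 else |x i| ≤ 5 * b / 16} ∧
      cubeC (ctrQb n b) (2 * (5 * b / 8)) =
        {x : Rn n | ∀ i : Fin n,
          if (i : ℕ) = n - 1 then -b / 4 ≤ x i ∧ x i ≤ b else |x i| ≤ 5 * b / 8}) ∧
    (∃ c C : ℝ, 0 < c ∧ 0 < C ∧ ∀ b : ℝ, 0 < b → b < 1 / 9 →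
      (c * b ^ ((n : ℝ) + 1 / 2) ≤ (wInt (wHalf n) (cubeC (ctrQb n b) (5 * b / 8))).toReal ∧
        (wInt (wHalf n) (cubeC (ctrQb n b) (5 * b / 8))).toReal ≤ C * b ^ ((n : ℝ) + 1 / 2)) ∧
      (c * b ^ (n : ℝ) ≤ (wInt (wHalf n) (cubeC (ctrQb n b) (2 * (5 * b / 8)))).toReal ∧
        (wInt (wHalf n) (cubeC (ctrQb n b) (2 * (5 * b / 8)))).toReal ≤ C * b ^ (n : ℝ))) ∧
    ¬ ∃ C₀ : ℝ, ∀ (c : Rn n) (ℓ : ℝ), 0 < ℓ →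
        (wInt (wHalf n) (cubeC c (2 * ℓ))).toReal ≤ C₀ * (wInt (wHalf n) (cubeC c ℓ)).toReal := by
  obtain ⟨c, C, hc, hC, hbounds⟩ := exists_wInt_wHalf_Qb_bounds hn
  refine ⟨isApDeltaN_wHalf hn hp,
    fun b _ => ⟨cubeC_ctrQb_eq (by ring) (by ring) (by ring),
      cubeC_ctrQb_eq (by ring) (by ring) (by ring)⟩,
    ⟨c, C, hc, hC, hbounds⟩, ?_⟩
  exact not_doubling_of_Qb_bounds hc fun b hb hb₉ =>
    ⟨(hbounds b hb hb₉).1.2, (hbounds b hb hb₉).2.1⟩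

end Paper
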